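/- arXiv:1611.06598 — 3 statements merged into one kernel-verified Lean document; each statement's English description precedes it below -/
import Mathlib

section
/- Let p(x) = Σ_{i=0}^d x^{d−i}(−1)^i a^p_i be a monic polynomial of degree d with moments (m^p_n)_{n≥1}. Then for every n with 1 ≤ n ≤ d, a^p_n = (1/n!) · Σ_{π ∈ P(n)} d^{|π|} μ(0_n, π) m^p_π. -/
/-
Since `μ(0, π) = ∏_{V ∈ π} (-1)^{|V|-1} (|V|-1)!` and `d · m_k = p_k` is the `k`-th power sum
of the roots, the right-hand side is `(1/n!) S_n` with `S_n = Σ_{π ∈ P(n)} ∏_{V ∈ π} w_{|V|}`,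
`w_k = (-1)^{k-1} (k-1)! p_k`. Splitting off the block containing a fixed point gives
`S_{m+1} = Σ_k C(m,k) w_{k+1} S_{m-k}`, and `S_m = m! e_m` satisfies this recursion because it is
Newton's identity `(m+1) e_{m+1} = Σ_k (-1)^k p_{k+1} e_{m-k}`. By Vieta, `a^p_n = e_n`.
-/

open Finset Polynomial
open scoped Classical

/-- The set `P(n)` of set partitions of `[n] = {1, …, n}` (as partitions of `Fin n`),
partially ordered by reverse refinement, with minimum `⊥ = 0_n` (all singletons) and
maximum `⊤ = 1_n` (one block). -/
abbrev SetPartition (n : ℕ) : Type := Finpartition (Finset.univ : Finset (Fin n))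

/-- The Möbius function `μ(0_n, π) = (−1)^{n−|π|} ∏_{V ∈ π} (|V|−1)!` of the partition
lattice `P(n)`, evaluated at the bottom element and a partition `π`. -/
noncomputable def mu0 (n : ℕ) (π : SetPartition n) : ℂ :=
  (-1 : ℂ) ^ (n - π.parts.card) * ∏ V ∈ π.parts, (Nat.factorial (V.card - 1) : ℂ)

/-- The coefficients `a^p_i` of a degree-`d` polynomial written as
`p(x) = Σ_{i=0}^d x^{d-i} (−1)^i a^p_i`, with the convention `a^p_i = 0` for `i > d`. -/
noncomputable def coeffA (d : ℕ) (p : Polynomial ℂ) (i : ℕ) : ℂ :=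
  if i ≤ d then (-1 : ℂ) ^ i * p.coeff (d - i) else 0

/-- The `d`-finite free cumulants associated to a coefficient sequence `a`:
`κ_n = ((−d)^n/(d·(n−1)!)) · Σ_{π ∈ P(n)} (−1)^{|π|} N!_π a_π (|π|−1)! / (d)_π`. -/
noncomputable def finCumulant (d : ℕ) (a : ℕ → ℂ) (k : ℕ) : ℂ :=
  (-(d : ℂ)) ^ k / ((d : ℂ) * (Nat.factorial (k - 1) : ℂ)) *
    ∑ π : SetPartition k,
      ((-1 : ℂ) ^ π.parts.card * (∏ V ∈ π.parts, (Nat.factorial V.card : ℂ)) *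
          (∏ V ∈ π.parts, a V.card) * (Nat.factorial (π.parts.card - 1) : ℂ)) /
        (∏ V ∈ π.parts, (Nat.descFactorial d V.card : ℂ))

/-- The `n`-th moment `m^p_n = (1/d) Σ_{i=1}^d r_i^n` of a monic degree-`d`
polynomial with roots `r 0, …, r (d-1)` counted with multiplicity. -/
noncomputable def momentOf (d : ℕ) (r : Fin d → ℂ) (k : ℕ) : ℂ :=
  (∑ i, r i ^ k) / (d : ℂ)

lemma Finset.sum_powerset_filter_mem {α M : Type*} [DecidableEq α] [AddCommMonoid M]
    {s : Finset α} {a : α} (ha : a ∈ s) (f : Finset α → M) :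
    ∑ B ∈ s.powerset with a ∈ B, f B = ∑ t ∈ (s.erase a).powerset, f (insert a t) := by
  conv_lhs => rw [← insert_erase ha]
  rw [sum_filter, sum_powerset_insert (notMem_erase a s)]
  have hnot : ∀ t ∈ (s.erase a).powerset, a ∉ t := fun t ht hat =>
    notMem_erase a s (mem_powerset.1 ht hat)
  simp [sum_ite, filter_false_of_mem hnot]

namespace Finpartition

variable {α : Type*} [DecidableEq α] {s : Finset α} {a : α}

lemma sum_card_sub_one_parts (P : Finpartition s) :
    ∑ V ∈ P.parts, (#V - 1) = #s - #P.parts := by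
  have h : ∑ V ∈ P.parts, (#V - 1) + #P.parts = #s := by
    rw [card_eq_sum_ones, ← sum_add_distrib, ← P.sum_card_parts]
    exact sum_congr rfl fun V hV => Nat.sub_add_cancel (P.nonempty_of_mem_parts hV).card_pos
  omega

lemma parts_avoid_of_mem (P : Finpartition s) {B : Finset α} (hB : B ∈ P.parts) :
    (P.avoid B).parts = P.parts.erase B := by
  ext V
  rw [mem_avoid, mem_erase]
  constructor
  · rintro ⟨D, hD, hDB, rfl⟩
    have hDB' : D ≠ B := fun h => hDB h.le
    have hd : Disjoint D B := P.disjoint hD hB hDB'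
    rw [Finset.sdiff_eq_self_iff_disjoint.2 hd]
    exact ⟨hDB', hD⟩
  · rintro ⟨hVB, hV⟩
    have hd : Disjoint V B := P.disjoint hV hB hVB
    exact ⟨V, hV, fun hle => P.ne_bot hV (hd.eq_bot_of_le hle),
      Finset.sdiff_eq_self_iff_disjoint.2 hd⟩

lemma sigma_ext_of_parts {x y : Σ B : Finset α, Finpartition (s \ B)} (h₁ : x.1 = y.1)
    (h₂ : x.2.parts = y.2.parts) : x = y := by
  obtain ⟨B, P⟩ := x
  obtain ⟨B', Q⟩ := y
  subst h₁
  exact congrArg _ (Finpartition.ext h₂)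

theorem sum_prod_parts_eq_sum_part {M : Type*} [CommSemiring M] (f : Finset α → M)
    (ha : a ∈ s) :
    ∑ P : Finpartition s, ∏ V ∈ P.parts, f V =
      ∑ B ∈ s.powerset with a ∈ B,
        f B * ∑ Q : Finpartition (s \ B), ∏ V ∈ Q.parts, f V := by
  simp_rw [mul_sum]
  rw [sum_sigma']
  set T := (s.powerset.filter (a ∈ ·)).sigma fun B => (univ : Finset (Finpartition (s \ B)))
  have hmem : ∀ x ∈ T, x.1 ⊆ s ∧ a ∈ x.1 := fun x hx => by simpa using (mem_sigma.1 hx).1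
  have hnot : ∀ x ∈ T, x.1 ∉ x.2.parts := fun x hx h =>
    (mem_sdiff.1 (x.2.le h (hmem x hx).2)).2 (hmem x hx).2
  symm
  refine sum_bij' (fun x hx => x.2.extend (ne_empty_of_mem (hmem x hx).2) sdiff_disjoint
      (sdiff_union_of_subset (hmem x hx).1))
    (fun P _ => ⟨P.part a, P.avoid (P.part a)⟩) (fun _ _ => mem_univ _) ?_ ?_ ?_ ?_
  · intro P _
    simp only [T, mem_sigma, mem_filter, mem_powerset, mem_univ, and_true]
    exact ⟨P.part_subset a, P.mem_part_self.2 ha⟩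
  · intro x hx
    have hpart : (x.2.extend (ne_empty_of_mem (hmem x hx).2) sdiff_disjoint
        (sdiff_union_of_subset (hmem x hx).1)).part a = x.1 :=
      part_eq_of_mem _ (by simp) (hmem x hx).2
    refine sigma_ext_of_parts hpart ?_
    rw [parts_avoid_of_mem _ (by rw [hpart]; simp), hpart, extend_parts,
      erase_insert (hnot x hx)]
  · intro P _
    ext1
    rw [extend_parts, parts_avoid_of_mem _ (P.part_mem.2 ha), insert_erase (P.part_mem.2 ha)]
  · intro x hx
    rw [extend_parts, prod_insert (hnot x hx)]

end Finpartition

namespace MvPolynomial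

variable (σ R : Type*) [Fintype σ] [CommRing R]

theorem succ_mul_esymm_succ (m : ℕ) :
    ((m + 1 : ℕ) : MvPolynomial σ R) * esymm σ R (m + 1) =
      ∑ k ∈ range (m + 1), (-1) ^ k * psum σ R (k + 1) * esymm σ R (m - k) := by
  rw [mul_esymm_eq_sum, sum_filter, Nat.sum_antidiagonal_succ', if_neg (lt_irrefl _), zero_add,
    ← Nat.sum_antidiagonal_swap, Nat.sum_antidiagonal_eq_sum_range_succ_mk, mul_sum]
  refine sum_congr rfl fun k hk => ?_
  have hkm : k ≤ m := Nat.lt_succ_iff.1 (mem_range.1 hk)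
  simp only [Prod.swap, if_pos (Nat.lt_succ_of_le (Nat.sub_le m k))]
  have hsign : (-1 : MvPolynomial σ R) ^ (m + 1 + 1) * (-1) ^ (m - k) = (-1) ^ k := by
    rw [← pow_add, show m + 1 + 1 + (m - k) = k + 2 * (m - k + 1) by omega, pow_add, pow_mul,
      neg_one_sq, one_pow, mul_one]
  rw [← hsign]
  ring

/-- `μ(0_k, 1_k) p_k`, so that `∏_{V ∈ π} moebiusPsum |V| = μ(0, π) p_π`. -/
noncomputable def moebiusPsum (k : ℕ) : MvPolynomial σ R :=
  (-1) ^ (k - 1) * (k - 1).factorial * psum σ R k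

theorem sum_finpartition_prod_moebiusPsum {α : Type*} [DecidableEq α] (s : Finset α) :
    ∑ P : Finpartition s, ∏ V ∈ P.parts, moebiusPsum σ R #V =
      (#s).factorial * esymm σ R #s := by
  induction s using Finset.strongInduction with
  | H s ih =>
  rcases s.eq_empty_or_nonempty with rfl | ⟨a, ha⟩
  · rw [← bot_eq_empty, Fintype.sum_unique, Finpartition.parts_eq_empty_iff.2 rfl]
    simp
  obtain ⟨m, hm⟩ : ∃ m, #s = m + 1 :=
    ⟨#s - 1, (Nat.sub_add_cancel (card_pos.2 ⟨a, ha⟩)).symm⟩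
  set g : ℕ → MvPolynomial σ R := fun k =>
    moebiusPsum σ R (k + 1) * ((m - k).factorial * esymm σ R (m - k))
  have hblock : ∀ t ∈ (s.erase a).powerset, moebiusPsum σ R #(insert a t) *
      ∑ Q : Finpartition (s \ insert a t), ∏ V ∈ Q.parts, moebiusPsum σ R #V = g #t := by
    intro t ht
    have hts : t ⊆ s.erase a := mem_powerset.1 ht
    have hsub : insert a t ⊆ s := insert_subset ha (hts.trans (erase_subset a s))
    rw [ih _ (sdiff_ssubset hsub (insert_nonempty a t)), card_sdiff_of_subset hsub,
      card_insert_of_notMem fun h => notMem_erase a s (hts h), hm, Nat.add_sub_add_right]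
  have hchoose : ∀ k ∈ range (m + 1), m.choose k • g k =
      m.factorial * ((-1) ^ k * psum σ R (k + 1) * esymm σ R (m - k)) := by
    intro k hk
    rw [← Nat.choose_mul_factorial_mul_factorial (Nat.lt_succ_iff.1 (mem_range.1 hk)),
      nsmul_eq_mul]
    simp only [g, moebiusPsum, Nat.add_sub_cancel]
    push_cast
    ring
  rw [Finpartition.sum_prod_parts_eq_sum_part _ ha, sum_powerset_filter_mem ha,
    sum_congr rfl hblock, sum_powerset_apply_card g, card_erase_of_mem ha, hm, Nat.add_sub_cancel,
    sum_congr rfl hchoose, ← mul_sum, ← succ_mul_esymm_succ, Nat.factorial_succ]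
  push_cast
  ring

end MvPolynomial

lemma mu0_eq_prod {n : ℕ} (π : SetPartition n) :
    mu0 n π = ∏ V ∈ π.parts, ((-1 : ℂ) ^ (#V - 1) * (#V - 1).factorial) := by
  rw [mu0, prod_mul_distrib, prod_pow_eq_pow_sum, π.sum_card_sub_one_parts, card_univ,
    Fintype.card_fin]

lemma pow_card_mul_prod_momentOf {ι : Type*} {d : ℕ} (r : Fin d → ℂ) (S : Finset ι)
    (k : ι → ℕ) (hS : #S ≤ d) :
    (d : ℂ) ^ #S * ∏ j ∈ S, momentOf d r (k j) = ∏ j ∈ S, ∑ i, r i ^ k j := by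
  have hpow : (d : ℂ) ^ #S ≠ 0 := by
    rcases Nat.eq_zero_or_pos d with rfl | hd
    · rw [Nat.le_zero.1 hS, pow_zero]
      exact one_ne_zero
    · exact pow_ne_zero _ (Nat.cast_ne_zero.2 hd.ne')
  simp only [momentOf, prod_div_distrib, prod_const]
  exact mul_div_cancel₀ _ hpow

lemma coeffA_prod_X_sub_C {d n : ℕ} (r : Fin d → ℂ) (hnd : n ≤ d) :
    coeffA d (∏ i, (X - C (r i))) n = (univ.val.map r).esymm n := by
  have hcard : Multiset.card (univ.val.map r) = d := by simp
  have hprod : ∏ i, (X - C (r i)) = ((univ.val.map r).map fun t => X - C t).prod := by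
    rw [prod_eq_multiset_prod, Multiset.map_map]
    rfl
  rw [coeffA, if_pos hnd, hprod, Multiset.prod_X_sub_C_coeff _ (hcard.symm ▸ Nat.sub_le d n),
    hcard, Nat.sub_sub_self hnd, ← mul_assoc, ← mul_pow, neg_one_mul, neg_neg, one_pow, one_mul]

theorem coefficient_moment_formula_general (d : ℕ) (r : Fin d → ℂ) (p : Polynomial ℂ)
    (hp : p = ∏ i, (X - C (r i))) (n : ℕ) (hnd : n ≤ d) :
    coeffA d p n =
      (1 / (Nat.factorial n : ℂ)) *
        ∑ π : SetPartition n,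
          (d : ℂ) ^ π.parts.card * mu0 n π * ∏ V ∈ π.parts, momentOf d r V.card := by
  have hterm : ∀ π : SetPartition n,
      (d : ℂ) ^ #π.parts * mu0 n π * ∏ V ∈ π.parts, momentOf d r #V =
        MvPolynomial.aeval r (∏ V ∈ π.parts, MvPolynomial.moebiusPsum (Fin d) ℂ #V) := by
    intro π
    have hcard : #π.parts ≤ d := π.card_parts_le_card.trans (by simpa using hnd)
    rw [mu0_eq_prod, mul_right_comm, pow_card_mul_prod_momentOf r _ _ hcard,
      ← prod_mul_distrib, map_prod]
    refine prod_congr rfl fun V _ => ?_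
    simp [MvPolynomial.moebiusPsum, MvPolynomial.psum, mul_comm]
  rw [hp, coeffA_prod_X_sub_C r hnd, sum_congr rfl fun π _ => hterm π, ← map_sum,
    MvPolynomial.sum_finpartition_prod_moebiusPsum, card_univ, Fintype.card_fin, map_mul,
    map_natCast, MvPolynomial.aeval_esymm_eq_multiset_esymm, ← mul_assoc, one_div,
    inv_mul_cancel₀ (Nat.cast_ne_zero.2 n.factorial_ne_zero), one_mul]

/-- **Moment–coefficient formula** (Lemma 4.1, first half): for a monic polynomial `p`
of degree `d` with roots `r_1, …, r_d` (counted with multiplicity), coefficients `a^p_i`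
and moments `m^p_n`, for every `1 ≤ n ≤ d`,
`a^p_n = (1/n!) Σ_{π ∈ P(n)} d^{|π|} μ(0_n, π) m^p_π`. -/
theorem coefficient_moment_formula (d : ℕ) (r : Fin d → ℂ) (p : Polynomial ℂ)
    (hp : p = ∏ i, (X - C (r i))) (n : ℕ) (hn1 : 1 ≤ n) (hnd : n ≤ d) :
    coeffA d p n =
      (1 / (Nat.factorial n : ℂ)) *
        ∑ π : SetPartition n,
          (d : ℂ) ^ π.parts.card * mu0 n π * ∏ V ∈ π.parts, momentOf d r V.card :=
  coefficient_moment_formula_general d r p hp n hnd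
end

section
/- Let p(x) = Σ_{i=0}^d x^{d−i}(−1)^i a^p_i be a monic polynomial of degree d, with the convention a^p_k = 0 for k > d. Then for every n ≥ 1, m^p_n = ((−1)^n/(d·(n−1)!)) · Σ_{π ∈ P(n)} (−1)^{|π|} N!_π (|π|−1)! a^p_π. -/
open Finset Polynomial
open scoped Classical

noncomputable def cw (b : ℕ) : ℂ := (-1) ^ (b - 1) * (Nat.factorial (b - 1) : ℂ)

noncomputable def Spart {N : ℕ} (g : ℕ → ℂ) (T : Finset (Fin N)) : ℂ :=
  ∑ π : Finpartition T, cw π.parts.card * ∏ V ∈ π.parts, g V.card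

def delPart {N : ℕ} {T : Finset (Fin N)} (π : Finpartition T) (B : Finset (Fin N))
    (hB : B ∈ π.parts) : Finpartition (T \ B) where
  parts := π.parts.erase B
  supIndep := π.supIndep.subset (erase_subset _ _)
  sup_parts := by
    apply le_antisymm
    · refine Finset.sup_le fun V hV => ?_
      have hVp := mem_of_mem_erase hV
      exact Finset.subset_sdiff.2 ⟨π.le hVp, π.disjoint hVp hB (ne_of_mem_erase hV)⟩
    · intro x hx
      rw [Finset.mem_sdiff] at hx
      obtain ⟨V, hV, hxV⟩ := π.exists_mem hx.1
      have hVB : V ≠ B := fun h => hx.2 (h ▸ hxV)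
      exact (Finset.le_sup (f := id) (mem_erase.2 ⟨hVB, hV⟩)) hxV
  bot_notMem h := π.bot_notMem (mem_of_mem_erase h)

@[simp] lemma delPart_parts {N : ℕ} {T : Finset (Fin N)} (π : Finpartition T)
    (B : Finset (Fin N)) (hB : B ∈ π.parts) : (delPart π B hB).parts = π.parts.erase B := rfl

lemma card_filter_not_mem {N : ℕ} {T : Finset (Fin N)} (π : Finpartition T) {a : Fin N}
    (ha : a ∈ T) : (π.parts.filter (fun B => a ∉ B)).card = π.parts.card - 1 := by
  have h1 : π.parts.filter (fun B => a ∈ B) = {π.part a} := by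
    ext V
    simp only [mem_filter, mem_singleton]
    constructor
    · rintro ⟨hV, haV⟩; exact (π.part_eq_of_mem hV haV).symm
    · rintro rfl; exact ⟨π.part_mem.2 ha, π.mem_part ha⟩
  have h2 := Finset.card_filter_add_card_filter_not
    (s := π.parts) (p := fun B => a ∈ B)
  rw [h1, Finset.card_singleton] at h2
  omega

lemma cw_step {b : ℕ} (hb : 1 ≤ b) :
    cw b = (if b = 1 then 1 else 0) - ((b : ℂ) - 1) * cw (b - 1) := by
  rcases Nat.eq_or_lt_of_le hb with h | h
  · simp [← h, cw]
  · have h2 : 2 ≤ b := h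
    rw [if_neg (by omega)]
    obtain ⟨c, rfl⟩ : ∃ c, b = c + 2 := ⟨b - 2, by omega⟩
    simp only [cw]
    push_cast
    rw [Nat.factorial_succ]
    push_cast
    ring

lemma Spart_rec {N : ℕ} (g : ℕ → ℂ) (T : Finset (Fin N)) (a : Fin N) (ha : a ∈ T) :
    Spart g T = g T.card
      - ∑ B ∈ (T.erase a).powerset with B ≠ ∅, g B.card * Spart g (T \ B) := by
  have hTne : T ≠ ⊥ := by
    rintro rfl; exact absurd ha (notMem_empty a)
  -- Step 1: pointwise rewriting of the weight
  have step1 : Spart g T =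
      (∑ π : Finpartition T, (if π.parts.card = 1 then (∏ V ∈ π.parts, g V.card) else 0))
      - ∑ π : Finpartition T, ∑ B ∈ π.parts.filter (fun B => a ∉ B),
          g B.card * (cw ((π.parts.erase B).card) * ∏ V ∈ π.parts.erase B, g V.card) := by
    rw [Spart, ← Finset.sum_sub_distrib]
    refine Finset.sum_congr rfl fun π _ => ?_
    have hb : 1 ≤ π.parts.card := by
      have := π.parts_nonempty hTne
      exact Finset.card_pos.2 this
    have hinner : ∀ B ∈ π.parts.filter (fun B => a ∉ B),
        g B.card * (cw ((π.parts.erase B).card) * ∏ V ∈ π.parts.erase B, g V.card)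
          = cw (π.parts.card - 1) * ∏ V ∈ π.parts, g V.card := by
      intro B hB
      have hBp : B ∈ π.parts := (mem_filter.1 hB).1
      rw [Finset.card_erase_of_mem hBp, ← Finset.mul_prod_erase _ _ hBp]
      ring
    rw [Finset.sum_congr rfl hinner, Finset.sum_const, card_filter_not_mem π ha,
      nsmul_eq_mul]
    rw [cw_step hb]
    have : ((π.parts.card - 1 : ℕ) : ℂ) = (π.parts.card : ℂ) - 1 := by
      push_cast [hb]; ring
    rw [this]
    split_ifs <;> ring
  rw [step1]
  congr 1
  · -- single-block partitions contribute g |T|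
    rw [Finset.sum_eq_single (Finpartition.indiscrete hTne)]
    · simp [Finpartition.indiscrete]
    · intro π _ hπ
      rw [if_neg]
      intro hcard
      obtain ⟨V, hV⟩ := Finset.card_eq_one.1 hcard
      have hVT : V = T := by
        have := π.sup_parts
        rw [hV, Finset.sup_singleton] at this
        exact this
      exact hπ (Finpartition.ext (by rw [hV, hVT]; rfl))
    · intro h; exact absurd (Finset.mem_univ _) h
  · -- the bijection between (π, marked block avoiding a) and (B, partition of T \ B)
    have hR : ∀ B ∈ (T.erase a).powerset.filter (· ≠ ∅),
        g B.card * Spart g (T \ B)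
          = ∑ π' : Finpartition (T \ B),
              g B.card * (cw π'.parts.card * ∏ V ∈ π'.parts, g V.card) := by
      intro B _; rw [Spart, Finset.mul_sum]
    rw [Finset.sum_congr rfl hR]
    rw [Finset.sum_sigma', Finset.sum_sigma']
    refine Finset.sum_bij'
      (fun x hx => ⟨x.2, delPart x.1 x.2 (Finset.mem_filter.1 (Finset.mem_sigma.1 hx).2).1⟩)
      (fun y hy =>
        ⟨Finpartition.extend (b := y.1) (c := T) y.2
          (by have := (Finset.mem_filter.1 (Finset.mem_sigma.1 hy).1).2; simpa using this)
          sdiff_disjoint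
          (sdiff_sup_cancel
            ((Finset.mem_powerset.1 (Finset.mem_filter.1 (Finset.mem_sigma.1 hy).1).1).trans
              (Finset.erase_subset _ _))), y.1⟩)
      ?_ ?_ ?_ ?_ ?_
    · -- hi
      intro x hx
      obtain ⟨hxu, hxB⟩ := Finset.mem_sigma.1 hx
      obtain ⟨hBp, haB⟩ := Finset.mem_filter.1 hxB
      rw [Finset.mem_sigma]
      refine ⟨Finset.mem_filter.2 ⟨Finset.mem_powerset.2 ?_, ?_⟩, Finset.mem_univ _⟩
      · exact Finset.subset_erase.2 ⟨x.1.le hBp, haB⟩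
      · simpa using x.1.ne_bot hBp
    · -- hj
      intro y hy
      rw [Finset.mem_sigma]
      refine ⟨Finset.mem_univ _, Finset.mem_filter.2 ⟨?_, ?_⟩⟩
      · exact Finset.mem_insert_self _ _
      · have := (Finset.mem_powerset.1 (Finset.mem_filter.1 (Finset.mem_sigma.1 hy).1).1)
        exact fun hay => (Finset.mem_erase.1 (this hay)).1 rfl
    · -- left_inv
      intro x hx
      obtain ⟨hxu, hxB⟩ := Finset.mem_sigma.1 hx
      obtain ⟨hBp, haB⟩ := Finset.mem_filter.1 hxB
      refine Sigma.ext ?_ (heq_of_eq ?_)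
      · exact Finpartition.ext (by simp [Finpartition.extend, Finset.insert_erase hBp])
      · rfl
    · -- right_inv
      intro y hy
      obtain ⟨hyB, hyu⟩ := Finset.mem_sigma.1 hy
      have hBne : y.1 ≠ ∅ := (Finset.mem_filter.1 hyB).2
      have hBnotmem : y.1 ∉ y.2.parts := by
        intro hmem
        have hsub : y.1 ⊆ T \ y.1 := y.2.le hmem
        obtain ⟨x, hx⟩ := Finset.nonempty_iff_ne_empty.2 hBne
        exact (Finset.mem_sdiff.1 (hsub hx)).2 hx
      refine Sigma.ext rfl (heq_of_eq ?_)
      exact Finpartition.ext (by simp [Finpartition.extend, Finset.erase_insert hBnotmem])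
    · -- values agree
      intro x hx
      rfl

lemma Spart_eq_of_rec {N : ℕ} (g F : ℕ → ℂ)
    (hnum : ∀ t, 1 ≤ t →
      F t = g t - ∑ j ∈ Finset.Ico 1 t, (Nat.choose (t-1) j : ℂ) * (g j * F (t - j))) :
    ∀ (m : ℕ) (T : Finset (Fin N)), T.card = m → T.Nonempty → Spart g T = F m := by
  intro m
  induction m using Nat.strong_induction_on with
  | _ m IH =>
    intro T hcard hne
    obtain ⟨a, ha⟩ := hne
    have hm : 1 ≤ m := hcard ▸ Finset.card_pos.2 ⟨a, ha⟩
    rw [Spart_rec g T a ha, hcard, hnum m hm]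
    congr 1
    have hpt : ∀ B ∈ (T.erase a).powerset.filter (· ≠ ∅),
        g B.card * Spart g (T \ B) = g B.card * F (m - B.card) := by
      intro B hB
      obtain ⟨hBsub, hBne⟩ := Finset.mem_filter.1 hB
      have hBsub' : B ⊆ T.erase a := Finset.mem_powerset.1 hBsub
      have hBT : B ⊆ T := hBsub'.trans (Finset.erase_subset _ _)
      have hBpos : 1 ≤ B.card := Finset.card_pos.2 (Finset.nonempty_iff_ne_empty.2 hBne)
      have hBle : B.card ≤ m := hcard ▸ Finset.card_le_card hBT
      have hcards : (T \ B).card = m - B.card := by rw [Finset.card_sdiff_of_subset hBT, hcard]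
      have haTB : a ∈ T \ B :=
        Finset.mem_sdiff.2 ⟨ha, fun haB => (Finset.mem_erase.1 (hBsub' haB)).1 rfl⟩
      rw [IH (m - B.card) (by omega) (T \ B) hcards ⟨a, haTB⟩]
    rw [Finset.sum_congr rfl hpt, Finset.sum_filter, Finset.sum_powerset]
    have hce : (T.erase a).card = m - 1 := by rw [Finset.card_erase_of_mem ha, hcard]
    rw [hce, show m - 1 + 1 = m by omega]
    rw [Finset.range_eq_Ico, Finset.sum_eq_sum_Ico_succ_bot (by omega : 0 < m)]
    have h0 : ∑ B ∈ Finset.powersetCard 0 (T.erase a),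
        (if B ≠ ∅ then g B.card * F (m - B.card) else 0) = 0 := by
      simp
    rw [h0, zero_add]
    refine Finset.sum_congr rfl fun j hj => ?_
    obtain ⟨hj1, hjm⟩ := Finset.mem_Ico.1 hj
    have hjcalc : ∀ B ∈ Finset.powersetCard j (T.erase a),
        (if B ≠ ∅ then g B.card * F (m - B.card) else 0) = g j * F (m - j) := by
      intro B hB
      obtain ⟨hBs, hBc⟩ := Finset.mem_powersetCard.1 hB
      rw [if_pos, hBc]
      intro h
      rw [h] at hBc
      simp at hBc
      omega
    rw [Finset.sum_congr rfl hjcalc, Finset.sum_const, Finset.card_powersetCard, hce,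
      nsmul_eq_mul]

noncomputable def Ey (d : ℕ) (r : Fin d → ℂ) (j : ℕ) : ℂ :=
  ∑ s ∈ Finset.powersetCard j (Finset.univ : Finset (Fin d)), ∏ i ∈ s, r i

noncomputable def Py (d : ℕ) (r : Fin d → ℂ) (k : ℕ) : ℂ := ∑ i, r i ^ k

lemma newton_complex (d : ℕ) (r : Fin d → ℂ) (t : ℕ) (ht : 0 < t) :
    Py d r t = (-1) ^ (t+1) * t * Ey d r t
      - ∑ a ∈ (Finset.HasAntidiagonal.antidiagonal t).filter (fun a => a.1 ∈ Set.Ioo 0 t),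
          (-1) ^ a.1 * Ey d r a.1 * Py d r a.2 := by
  have h := congrArg (MvPolynomial.aeval r) (MvPolynomial.psum_eq_mul_esymm_sub_sum (Fin d) ℂ t ht)
  simp only [MvPolynomial.psum, map_sub, map_mul, map_pow, map_neg, map_one, map_sum,
    map_natCast, MvPolynomial.aeval_esymm_eq_multiset_esymm, Finset.esymm_map_val,
    MvPolynomial.aeval_X] at h
  simpa only [Py, Ey] using h

lemma hnum_newton (d : ℕ) (r : Fin d → ℂ) (t : ℕ) (ht : 1 ≤ t) :
    (-1 : ℂ) ^ (t-1) * ((t-1).factorial : ℂ) * Py d r t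
      = (t.factorial : ℂ) * Ey d r t
        - ∑ j ∈ Finset.Ico 1 t, (Nat.choose (t-1) j : ℂ) *
            ((j.factorial : ℂ) * Ey d r j *
              ((-1 : ℂ) ^ (t-j-1) * ((t-j-1).factorial : ℂ) * Py d r (t - j))) := by
  rw [newton_complex d r t ht, mul_sub]
  congr 1
  · have hsign : (-1 : ℂ) ^ (t-1) * (-1) ^ (t+1) = 1 := by
      rw [← pow_add, show t - 1 + (t+1) = 2*t by omega, pow_mul]
      norm_num
    have hfac : (t.factorial : ℂ) = (t : ℂ) * ((t-1).factorial : ℂ) := by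
      rw [← Nat.mul_factorial_pred (by omega : t ≠ 0)]
      push_cast
      ring
    rw [hfac]
    calc (-1 : ℂ) ^ (t-1) * ((t-1).factorial : ℂ) * ((-1) ^ (t+1) * t * Ey d r t)
        = ((-1 : ℂ) ^ (t-1) * (-1) ^ (t+1)) * (((t-1).factorial : ℂ) * t * Ey d r t) := by ring
      _ = (t : ℂ) * ((t-1).factorial : ℂ) * Ey d r t := by rw [hsign]; ring
  · rw [Finset.mul_sum]
    refine Finset.sum_bij' (fun a _ => a.1) (fun j _ => (j, t - j)) ?_ ?_ ?_ ?_ ?_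
    · intro a hax
      obtain ⟨hanti, hIoo⟩ := Finset.mem_filter.1 hax
      obtain ⟨h1, h2⟩ := hIoo
      exact Finset.mem_Ico.2 ⟨h1, h2⟩
    · intro j hj
      obtain ⟨h1, h2⟩ := Finset.mem_Ico.1 hj
      simp only [Finset.mem_filter, Finset.HasAntidiagonal.mem_antidiagonal, Set.mem_Ioo]
      exact ⟨by omega, h1, h2⟩
    · intro a hax
      obtain ⟨hanti, hIoo⟩ := Finset.mem_filter.1 hax
      have := Finset.HasAntidiagonal.mem_antidiagonal.1 hanti
      ext <;> simp <;> omega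
    · intro j hj; rfl
    · intro a hax
      obtain ⟨hanti, hIoo⟩ := Finset.mem_filter.1 hax
      obtain ⟨h1, h2⟩ := hIoo
      have hsum := Finset.HasAntidiagonal.mem_antidiagonal.1 hanti
      have ha2 : a.2 = t - a.1 := by omega
      have hj1 : (1 : ℕ) ≤ a.1 := h1
      have hjle : a.1 ≤ t - 1 := by omega
      have hfact : ((t-1).factorial : ℂ)
          = (Nat.choose (t-1) a.1 : ℂ) * (a.1.factorial : ℂ) * ((t-a.1-1).factorial : ℂ) := by
        have := Nat.choose_mul_factorial_mul_factorial hjle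
        rw [show t - 1 - a.1 = t - a.1 - 1 by omega] at this
        exact_mod_cast this.symm
      have hsign : (-1 : ℂ) ^ (t - a.1 - 1) = (-1 : ℂ) ^ (t-1) * (-1) ^ a.1 := by
        rw [← pow_add, show t - 1 + a.1 = 2*a.1 + (t - a.1 - 1) by omega, pow_add, pow_mul]
        norm_num
      rw [ha2, hfact, hsign]
      ring

lemma coeffA_eq_Ey (d : ℕ) (r : Fin d → ℂ) (k : ℕ) :
    coeffA d (∏ i, (X - C (r i))) k = Ey d r k := by
  by_cases hk : k ≤ d
  · rw [coeffA, if_pos hk]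
    have hprod : (∏ i, (X - C (r i)))
        = (Multiset.map (fun t => X - C t) (Multiset.map r Finset.univ.val)).prod := by
      rw [Multiset.map_map]
      rfl
    have hcard : Multiset.card (Multiset.map r Finset.univ.val) = d := by
      simp
    have hco := Multiset.prod_X_sub_C_coeff (Multiset.map r Finset.univ.val)
      (k := d - k) (by rw [hcard]; omega)
    rw [hprod, hco, hcard, show d - (d - k) = k by omega, Finset.esymm_map_val]
    rw [← mul_assoc, ← pow_add]
    have : (-1 : ℂ) ^ (k + k) = 1 := by
      rw [show k + k = 2*k by omega, pow_mul]; norm_num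
    rw [this, one_mul, Ey]
  · rw [coeffA, if_neg hk, Ey]
    rw [Finset.powersetCard_eq_empty.2 (by simpa using by omega : Fintype.card (Fin d) < k)]
    simp

/-- **Moment–coefficient formula** (Lemma 4.1, second half): for a monic polynomial `p`
of degree `d` with roots `r_1, …, r_d` (counted with multiplicity), coefficients `a^p_i`
(with the convention `a^p_k = 0` for `k > d`) and moments `m^p_n`, for every `n ≥ 1`,
`m^p_n = ((−1)^n/(d(n−1)!)) Σ_{π ∈ P(n)} (−1)^{|π|} N!_π (|π|−1)! a^p_π`. -/
theorem moment_coefficient_formula (d : ℕ) (hd : 0 < d) (r : Fin d → ℂ) (p : Polynomial ℂ)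
    (hp : p = ∏ i, (X - C (r i))) (n : ℕ) (hn1 : 1 ≤ n) :
    momentOf d r n =
      ((-1 : ℂ) ^ n / ((d : ℂ) * (Nat.factorial (n - 1) : ℂ))) *
        ∑ π : SetPartition n,
          (-1 : ℂ) ^ π.parts.card * (∏ V ∈ π.parts, (Nat.factorial V.card : ℂ)) *
            (Nat.factorial (π.parts.card - 1) : ℂ) * ∏ V ∈ π.parts, coeffA d p V.card := by
  have hdC : (d : ℂ) ≠ 0 := Nat.cast_ne_zero.2 (by omega)
  have hfC : ((n-1).factorial : ℂ) ≠ 0 := Nat.cast_ne_zero.2 (Nat.factorial_ne_zero _)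
  set g : ℕ → ℂ := fun k => (k.factorial : ℂ) * Ey d r k with hg
  set F : ℕ → ℂ := fun t => (-1 : ℂ) ^ (t-1) * ((t-1).factorial : ℂ) * Py d r t with hF
  have hnum' : ∀ t, 1 ≤ t →
      F t = g t - ∑ j ∈ Finset.Ico 1 t, (Nat.choose (t-1) j : ℂ) * (g j * F (t - j)) := by
    intro t ht
    have h := hnum_newton d r t ht
    simp only [hg, hF]
    convert h using 3
  have huniv : (Finset.univ : Finset (Fin n)).Nonempty := ⟨⟨0, by omega⟩, Finset.mem_univ _⟩
  have hs : Spart g (Finset.univ : Finset (Fin n)) = F n :=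
    Spart_eq_of_rec g F hnum' n Finset.univ (by simp) huniv
  have hsum : (∑ π : SetPartition n,
      (-1 : ℂ) ^ π.parts.card * (∏ V ∈ π.parts, (Nat.factorial V.card : ℂ)) *
        (Nat.factorial (π.parts.card - 1) : ℂ) * ∏ V ∈ π.parts, coeffA d p V.card)
      = - Spart g (Finset.univ : Finset (Fin n)) := by
    rw [Spart, ← Finset.sum_neg_distrib]
    refine Finset.sum_congr rfl fun π _ => ?_
    have hb : 1 ≤ π.parts.card := by
      refine Finset.card_pos.2 (π.parts_nonempty ?_)
      intro hbot
      have := huniv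
      rw [hbot] at this
      exact absurd this (by simp)
    have hcoeff : ∀ V ∈ π.parts, coeffA d p V.card = Ey d r V.card := by
      intro V _
      rw [hp]
      exact coeffA_eq_Ey d r V.card
    rw [Finset.prod_congr rfl hcoeff]
    simp only [hg, cw, Finset.prod_mul_distrib]
    rw [show π.parts.card = (π.parts.card - 1) + 1 by omega, pow_succ]
    ring_nf
    rw [show 1 + (π.parts.card - 1) - 1 = π.parts.card - 1 by omega]
  rw [hsum, hs, hF]
  have hsign : (-1 : ℂ) ^ n * (-1 : ℂ) ^ (n-1) = -1 := by
    rw [← pow_add, show n + (n-1) = 2*(n-1)+1 by omega, pow_add, pow_mul]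
    norm_num
  rw [momentOf]
  have : (∑ i, r i ^ n) = Py d r n := rfl
  rw [this]
  field_simp
  ring_nf
  linear_combination (Py d r n) * hsign
end

section
/- Let p be a monic polynomial of degree d with moments (m_n)_{n≥1} and d-finite free cumulants (κ_n)_{n=1}^d. Then for every n with 1 ≤ n ≤ d, κ_n = ((−1)^n d^{n−1}/(n−1)!) · Σ_{σ ∈ P(n)} d^{|σ|} μ(0_n, σ) m_σ · Σ_{π ≥ σ} (−1)^{|π|} (|π|−1)! / (d)_π. -/
open Finset Polynomial
open scoped Classical

namespace CMAux

variable {α : Type*} [DecidableEq α] {d : ℕ}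

/-- elementary symmetric function of the roots -/
noncomputable def Esym (r : Fin d → ℂ) (k : ℕ) : ℂ := (Finset.univ.val.map r).esymm k

/-- power sums of the roots -/
noncomputable def Psum (r : Fin d → ℂ) (k : ℕ) : ℂ := ∑ i, r i ^ k

@[simp] lemma Esym_zero (r : Fin d → ℂ) : Esym r 0 = 1 := by
  simp [Esym, Multiset.esymm]

lemma aeval_esymm (r : Fin d → ℂ) (k : ℕ) :
    MvPolynomial.aeval r (MvPolynomial.esymm (Fin d) ℂ k) = Esym r k :=
  MvPolynomial.aeval_esymm_eq_multiset_esymm (σ := Fin d) (R := ℂ) k r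

lemma aeval_psum (r : Fin d → ℂ) (k : ℕ) :
    MvPolynomial.aeval r (MvPolynomial.psum (Fin d) ℂ k) = Psum r k := by
  simp [MvPolynomial.psum, Psum]

/-- Newton's identity over ℂ. -/
lemma newton (r : Fin d → ℂ) (k : ℕ) :
    (k : ℂ) * Esym r k = (-1 : ℂ) ^ (k + 1) *
      ∑ a ∈ (antidiagonal k).filter (fun a => a.1 < k),
        (-1 : ℂ) ^ a.1 * Esym r a.1 * Psum r a.2 := by
  have h := congrArg (MvPolynomial.aeval r) (MvPolynomial.mul_esymm_eq_sum (Fin d) ℂ k)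
  simpa [map_sum, map_mul, map_pow, aeval_esymm, aeval_psum] using h

/-- Newton's identity in range form. -/
lemma newton' (r : Fin d → ℂ) (k : ℕ) :
    ((k : ℂ) + 1) * Esym r (k + 1)
      = ∑ i ∈ range (k + 1), (-1 : ℂ) ^ i * Psum r (i + 1) * Esym r (k - i) := by
  have h0 := newton r (k + 1)
  push_cast at h0
  rw [h0]
  have h1 : ∑ a ∈ (antidiagonal (k+1)).filter (fun a => a.1 < k+1),
      (-1 : ℂ) ^ a.1 * Esym r a.1 * Psum r a.2
      = ∑ j ∈ range (k + 1), (-1 : ℂ) ^ j * Esym r j * Psum r (k + 1 - j) := by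
    rw [Finset.sum_filter, Finset.Nat.sum_antidiagonal_eq_sum_range_succ_mk,
      Finset.sum_range_succ, if_neg (lt_irrefl _), add_zero]
    exact Finset.sum_congr rfl fun j hj => if_pos (mem_range.mp hj)
  rw [h1, ← Finset.sum_range_reflect]
  rw [Finset.mul_sum]
  refine Finset.sum_congr rfl fun i hi => ?_
  have hik : i ≤ k := Nat.lt_succ_iff.mp (mem_range.mp hi)
  have h2 : k + 1 - 1 - i = k - i := by omega
  have h3 : k + 1 - (k - i) = i + 1 := by omega
  rw [h2, h3]
  have h4 : (-1 : ℂ) ^ (k + 1 + 1) * ((-1 : ℂ) ^ (k - i)) = (-1 : ℂ) ^ i := by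
    rw [← pow_add]
    have : k + 1 + 1 + (k - i) = 2 * (k - i + 1) + i := by omega
    rw [this, pow_add, pow_mul, neg_one_sq, one_pow, one_mul]
  calc (-1:ℂ) ^ (k+1+1) * ((-1:ℂ) ^ (k-i) * Esym r (k-i) * Psum r (i+1))
      = ((-1:ℂ) ^ (k+1+1) * (-1:ℂ) ^ (k-i)) * Esym r (k-i) * Psum r (i+1) := by ring
    _ = (-1:ℂ) ^ i * Psum r (i+1) * Esym r (k-i) := by rw [h4]; ring

lemma avoid_parts_eq {s : Finset α} (σ : Finpartition s) {B : Finset α} (hB : B ∈ σ.parts) :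
    (σ.avoid B).parts = σ.parts.erase B := by
  ext c
  rw [Finpartition.mem_avoid, mem_erase]
  constructor
  · rintro ⟨e, he, hle, rfl⟩
    have heB : e ≠ B := fun h => hle (h ▸ le_rfl)
    have hdisj : Disjoint e B := σ.disjoint he hB heB
    rw [hdisj.sdiff_eq_left]
    exact ⟨heB, he⟩
  · rintro ⟨hcB, hc⟩
    have hdisj : Disjoint c B := σ.disjoint hc hB hcB
    refine ⟨c, hc, fun hle => σ.ne_bot hc (hdisj.eq_bot_of_le hle), hdisj.sdiff_eq_left⟩

/-- Restriction of a partition to a subset that is a union of parts. -/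
def restrict {s : Finset α} (σ : Finpartition s) (B : Finset α) (hBs : B ⊆ s)
    (h : ∀ x ∈ B, σ.part x ⊆ B) : Finpartition B where
  parts := σ.parts.filter (· ⊆ B)
  supIndep := σ.supIndep.subset (filter_subset _ _)
  sup_parts := by
    apply le_antisymm
    · exact Finset.sup_le fun V hV => (mem_filter.mp hV).2
    · intro x hx
      have hxs : x ∈ s := hBs hx
      have h1 : σ.part x ∈ σ.parts.filter (· ⊆ B) :=
        mem_filter.mpr ⟨σ.part_mem.2 hxs, h x hx⟩
      exact (Finset.le_sup (f := id) h1 : σ.part x ⊆ _) (σ.mem_part hxs)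
  bot_notMem := fun hbot => σ.bot_notMem (mem_filter.mp hbot).1

@[simp] lemma restrict_parts {s : Finset α} (σ : Finpartition s) (B : Finset α) (hBs : B ⊆ s)
    (h : ∀ x ∈ B, σ.part x ⊆ B) : (restrict σ B hBs h).parts = σ.parts.filter (· ⊆ B) := rfl

lemma part_subset_of_le {s : Finset α} {σ π : Finpartition s} (hσπ : σ ≤ π) {B : Finset α}
    (hB : B ∈ π.parts) : ∀ x ∈ B, σ.part x ⊆ B := by
  intro x hx
  have hxs : x ∈ s := π.le hB hx
  obtain ⟨C, hC, hsub⟩ := hσπ (σ.part_mem.2 hxs)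
  have hCB : C = B := π.eq_of_mem_parts hC hB (hsub (σ.mem_part hxs)) hx
  exact hCB ▸ hsub

/-- Recursion: classify partitions of `s` by the block containing `a`. -/
lemma partition_sum_rec (w : ℕ → ℂ) {s : Finset α} {a : α} (ha : a ∈ s) :
    ∑ σ : Finpartition s, ∏ V ∈ σ.parts, w V.card
      = ∑ B ∈ s.powerset.filter (fun B => a ∈ B),
          w B.card * ∑ τ : Finpartition (s \ B), ∏ V ∈ τ.parts, w V.card := by
  rw [← Finset.sum_fiberwise_of_maps_to (g := fun σ : Finpartition s => σ.part a)
      (t := s.powerset.filter (fun B => a ∈ B))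
      (fun σ _ => mem_filter.mpr ⟨mem_powerset.mpr (σ.le (σ.part_mem.2 ha)), σ.mem_part ha⟩)]
  refine Finset.sum_congr rfl fun B hB => ?_
  obtain ⟨hBs', haB⟩ := mem_filter.mp hB
  rw [mem_powerset] at hBs'
  have hBne : B ≠ ⊥ := by
    intro h
    rw [h] at haB
    exact absurd haB (Finset.notMem_empty a)
  rw [Finset.mul_sum]
  refine Finset.sum_bij' (i := fun σ _ => σ.avoid B)
    (j := fun τ _ => τ.extend hBne sdiff_disjoint (sdiff_sup_cancel hBs'))
    (fun σ _ => mem_univ _) ?_ ?_ ?_ ?_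
  · -- j maps into the fiber
    intro τ _
    refine mem_filter.mpr ⟨mem_univ _, ?_⟩
    exact Finpartition.part_eq_of_mem _ (by rw [Finpartition.extend_parts]; exact mem_insert_self _ _) haB
  · -- left inverse
    intro σ hσ
    have hmem : B ∈ σ.parts := by
      have := (mem_filter.mp hσ).2
      rw [← this]; exact σ.part_mem.2 ha
    ext V
    rw [Finpartition.extend_parts, avoid_parts_eq σ hmem, insert_erase hmem]
  · -- right inverse
    intro τ _
    have hBnotin : B ∉ τ.parts := by
      intro hBin
      exact absurd (τ.le hBin haB) (by simp [haB])
    ext V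
    rw [avoid_parts_eq _ (by rw [Finpartition.extend_parts]; exact mem_insert_self _ _),
      Finpartition.extend_parts, erase_insert hBnotin]
  · -- weights
    intro σ hσ
    have hmem : B ∈ σ.parts := by
      have := (mem_filter.mp hσ).2
      rw [← this]; exact σ.part_mem.2 ha
    rw [avoid_parts_eq σ hmem, ← Finset.mul_prod_erase σ.parts _ hmem]

/-- Multiplicativity over the blocks of `π` of the weighted sum over `σ ≤ π`. -/
lemma partition_sum_le_eq_prod (w : ℕ → ℂ) {s : Finset α} (π : Finpartition s) :
    ∑ σ ∈ Finset.univ.filter (fun σ : Finpartition s => σ ≤ π), ∏ V ∈ σ.parts, w V.card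
      = ∏ B ∈ π.parts, ∑ τ : Finpartition B, ∏ V ∈ τ.parts, w V.card := by
  rw [Finset.prod_sum]
  refine Finset.sum_bij'
    (i := fun σ hσ => fun (B : Finset α) (hB : B ∈ π.parts) =>
      restrict σ B (π.le hB) (part_subset_of_le (mem_filter.mp hσ).2 hB))
    (j := fun Q hQ => π.bind (fun B hB => Q B hB)) ?_ ?_ ?_ ?_ ?_
  · intro σ hσ
    exact Finset.mem_pi.mpr fun B hB => mem_univ _
  · -- bind lands in the filter
    intro Q hQ
    refine mem_filter.mpr ⟨mem_univ _, fun b hb => ?_⟩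
    obtain ⟨A, hA, hbA⟩ := Finpartition.mem_bind.mp hb
    exact ⟨A, hA, (Q A hA).le hbA⟩
  · -- left inverse : bind of restrictions is σ
    intro σ hσ
    have hle : σ ≤ π := (mem_filter.mp hσ).2
    ext V
    rw [Finpartition.mem_bind]
    constructor
    · rintro ⟨A, hA, hV⟩
      exact (mem_filter.mp hV).1
    · intro hV
      obtain ⟨C, hC, hsub⟩ := hle hV
      exact ⟨C, hC, mem_filter.mpr ⟨hV, hsub⟩⟩
  · -- right inverse
    intro Q hQ
    funext B hB
    ext V
    simp only [restrict_parts, mem_filter, Finpartition.mem_bind]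
    constructor
    · rintro ⟨⟨A, hA, hVA⟩, hVB⟩
      obtain ⟨y, hy⟩ := (Q A hA).nonempty_of_mem_parts hVA
      have hAB : A = B := π.eq_of_mem_parts hA hB ((Q A hA).le hVA hy) (hVB hy)
      subst hAB
      exact hVA
    · intro hV
      exact ⟨⟨B, hB, hV⟩, (Q B hB).le hV⟩
  · -- weights
    intro σ hσ
    have hle : σ ≤ π := (mem_filter.mp hσ).2
    have hparts : σ.parts = π.parts.attach.biUnion
        (fun B => σ.parts.filter (· ⊆ B.1)) := by
      ext V
      simp only [mem_biUnion, mem_attach, true_and, mem_filter, Subtype.exists]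
      constructor
      · intro hV
        obtain ⟨C, hC, hsub⟩ := hle hV
        exact ⟨C, hC, hV, hsub⟩
      · rintro ⟨A, hA, hV, _⟩
        exact hV
    have hdisj : (↑π.parts.attach : Set {x // x ∈ π.parts}).PairwiseDisjoint
        (fun B : {x // x ∈ π.parts} => σ.parts.filter (· ⊆ B.1)) := by
      intro A hA B hB hAB
      simp only [Function.onFun, Finset.disjoint_left, mem_filter]
      rintro V ⟨hVσ, hVA⟩ ⟨-, hVB⟩
      obtain ⟨y, hy⟩ := σ.nonempty_of_mem_parts hVσ
      exact hAB (Subtype.ext (π.eq_of_mem_parts A.2 B.2 (hVA hy) (hVB hy)))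
    rw [hparts, Finset.prod_biUnion hdisj]
    exact Finset.prod_congr rfl fun B _ => rfl

/-- the weight attached to a block of size `j` -/
noncomputable def wgt (r : Fin d → ℂ) (j : ℕ) : ℂ :=
  (-1 : ℂ) ^ (j - 1) * ((j - 1).factorial : ℂ) * Psum r j

lemma partition_sum_card (r : Fin d → ℂ) :
    ∀ (m : ℕ) (s : Finset α), s.card = m →
      (∑ σ : Finpartition s, ∏ V ∈ σ.parts, wgt r V.card) = (m.factorial : ℂ) * Esym r m := by
  intro m
  induction m using Nat.strong_induction_on with
  | _ m ih =>
  intro s hs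
  rcases Nat.eq_zero_or_pos m with hm | hm
  · subst hm
    rw [card_eq_zero] at hs; subst hs
    haveI : Unique (Finpartition (∅ : Finset α)) :=
      inferInstanceAs (Unique (Finpartition (⊥ : Finset α)))
    have hu : ∀ σ : Finpartition (∅ : Finset α), σ.parts = ∅ :=
      fun σ => Finpartition.parts_eq_empty_iff.mpr rfl
    calc (∑ σ : Finpartition (∅ : Finset α), ∏ V ∈ σ.parts, wgt r V.card)
        = ∑ _σ : Finpartition (∅ : Finset α), 1 :=
          Finset.sum_congr rfl fun σ _ => by rw [hu σ]; exact Finset.prod_empty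
      _ = 1 := by rw [Finset.sum_const, Finset.card_univ, Fintype.card_unique, one_smul]
      _ = _ := by simp
  · have hsne : s.Nonempty := card_pos.mp (hs ▸ hm)
    obtain ⟨a, ha⟩ := hsne
    obtain ⟨m', rfl⟩ : ∃ m', m = m' + 1 := ⟨m - 1, by omega⟩
    rw [partition_sum_rec (wgt r) ha]
    have hstep : ∀ B ∈ s.powerset.filter (fun B => a ∈ B),
        wgt r B.card * (∑ τ : Finpartition (s \ B), ∏ V ∈ τ.parts, wgt r V.card)
          = wgt r B.card * (((m' + 1 - B.card).factorial : ℂ) * Esym r (m' + 1 - B.card)) := by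
      intro B hB
      obtain ⟨hBs, haB⟩ := mem_filter.mp hB
      rw [mem_powerset] at hBs
      have hcard : (s \ B).card = m' + 1 - B.card := by rw [card_sdiff_of_subset hBs, hs]
      have hlt : m' + 1 - B.card < m' + 1 := by
        have : 0 < B.card := card_pos.mpr ⟨a, haB⟩
        omega
      rw [ih _ hlt _ hcard]
    rw [Finset.sum_congr rfl hstep]
    have hbij : ∑ B ∈ s.powerset.filter (fun B => a ∈ B),
        wgt r B.card * (((m' + 1 - B.card).factorial : ℂ) * Esym r (m' + 1 - B.card))
        = ∑ C ∈ (s.erase a).powerset,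
            wgt r (C.card + 1) * (((m' - C.card).factorial : ℂ) * Esym r (m' - C.card)) := by
      refine Finset.sum_bij' (i := fun B _ => B.erase a) (j := fun C _ => insert a C)
        ?_ ?_ ?_ ?_ ?_
      · intro B hB
        obtain ⟨hBs, _⟩ := mem_filter.mp hB
        rw [mem_powerset] at hBs
        exact mem_powerset.mpr (erase_subset_erase a hBs)
      · intro C hC
        rw [mem_powerset] at hC
        exact mem_filter.mpr ⟨mem_powerset.mpr
          (insert_subset ha (hC.trans (erase_subset a s))), mem_insert_self a C⟩
      · intro B hB
        exact insert_erase (mem_filter.mp hB).2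
      · intro C hC
        exact erase_insert fun haC => (mem_erase.mp (mem_powerset.mp hC haC)).1 rfl
      · intro B hB
        have haB := (mem_filter.mp hB).2
        have h1 : B.card = (B.erase a).card + 1 := by
          rw [card_erase_of_mem haB]
          have := card_pos.mpr ⟨a, haB⟩
          omega
        have h2 : m' + 1 - ((B.erase a).card + 1) = m' - (B.erase a).card := by omega
        rw [h1, h2]
    rw [hbij]
    have hce : (s.erase a).card = m' := by rw [card_erase_of_mem ha, hs]; omega
    rw [Finset.sum_powerset_apply_card
      (f := fun c => wgt r (c + 1) * (((m' - c).factorial : ℂ) * Esym r (m' - c))), hce]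
    have hterm : ∀ i ∈ range (m' + 1),
        (m'.choose i) • (wgt r (i + 1) * (((m' - i).factorial : ℂ) * Esym r (m' - i)))
          = (m'.factorial : ℂ) * ((-1 : ℂ) ^ i * Psum r (i + 1) * Esym r (m' - i)) := by
      intro i hi
      have hi' : i ≤ m' := Nat.lt_succ_iff.mp (mem_range.mp hi)
      have hfac : ((m'.choose i : ℂ) * (i.factorial : ℂ) * ((m' - i).factorial : ℂ))
          = (m'.factorial : ℂ) := by
        rw [← Nat.cast_mul, ← Nat.cast_mul, Nat.choose_mul_factorial_mul_factorial hi']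
      rw [nsmul_eq_mul]
      simp only [wgt, Nat.add_sub_cancel]
      calc (m'.choose i : ℂ) * ((-1:ℂ)^i * (i.factorial : ℂ) * Psum r (i+1)
              * (((m' - i).factorial : ℂ) * Esym r (m' - i)))
          = ((m'.choose i : ℂ) * (i.factorial : ℂ) * ((m' - i).factorial : ℂ))
              * ((-1:ℂ)^i * Psum r (i+1) * Esym r (m' - i)) := by ring
        _ = _ := by rw [hfac]
    rw [Finset.sum_congr rfl hterm, ← Finset.mul_sum, ← newton' r m']
    rw [Nat.factorial_succ]
    push_cast
    ring

lemma coeffA_eq_esymm {p : Polynomial ℂ} (r : Fin d → ℂ) (hp : p = ∏ i, (X - C (r i)))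
    (k : ℕ) (hk : k ≤ d) : coeffA d p k = Esym r k := by
  have hcard : Multiset.card (Finset.univ.val.map r) = d := by simp
  have hprod : p = ((Finset.univ.val.map r).map (fun t => X - C t)).prod := by
    rw [hp, Multiset.map_map]
    rfl
  rw [coeffA, if_pos hk, hprod, Multiset.prod_X_sub_C_coeff _ (by rw [hcard]; omega), hcard]
  have h1 : d - (d - k) = k := by omega
  rw [h1, ← mul_assoc, ← mul_pow]
  simp [Esym]


lemma const_eq {d n : ℕ} (hn1 : 1 ≤ n) (hnd : n ≤ d) :
    (-(d : ℂ)) ^ n / ((d : ℂ) * ((n-1).factorial : ℂ))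
      = (-1 : ℂ) ^ n * (d : ℂ) ^ (n - 1) / ((n-1).factorial : ℂ) := by
  have hd0 : (d : ℂ) ≠ 0 := by
    have : 0 < d := lt_of_lt_of_le hn1 hnd
    exact_mod_cast this.ne'
  have hf0 : (((n-1).factorial : ℂ)) ≠ 0 := by
    exact_mod_cast (n-1).factorial_ne_zero
  have h1 : (-(d : ℂ)) ^ n = (-1 : ℂ) ^ n * (d : ℂ) ^ n := by
    rw [neg_pow]
  have h2 : (d : ℂ) ^ n = (d : ℂ) * (d : ℂ) ^ (n - 1) := by
    conv_lhs => rw [show n = 1 + (n - 1) by omega]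
    rw [pow_add, pow_one]
  rw [h1, h2]
  field_simp

end CMAux

open CMAux

/-- **Cumulant–moment formula** (Theorem 4.2, Eq. (4.1)): for a monic polynomial `p` of
degree `d` with moments `m_n` and `d`-finite free cumulants `κ_n`, for every `1 ≤ n ≤ d`,
`κ_n = ((−1)^n d^{n−1}/(n−1)!) Σ_{σ ∈ P(n)} d^{|σ|} μ(0,σ) m_σ
  Σ_{π ≥ σ} (−1)^{|π|}(|π|−1)!/(d)_π`. -/
theorem cumulant_moment_formula (d : ℕ) (r : Fin d → ℂ) (p : Polynomial ℂ)
    (hp : p = ∏ i, (X - C (r i))) (n : ℕ) (hn1 : 1 ≤ n) (hnd : n ≤ d) :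
    finCumulant d (coeffA d p) n =
      ((-1 : ℂ) ^ n * (d : ℂ) ^ (n - 1) / (Nat.factorial (n - 1) : ℂ)) *
        ∑ σ : SetPartition n,
          (d : ℂ) ^ σ.parts.card * mu0 n σ * (∏ V ∈ σ.parts, momentOf d r V.card) *
            ∑ π ∈ Finset.univ.filter (fun π : SetPartition n => σ ≤ π),
              ((-1 : ℂ) ^ π.parts.card * (Nat.factorial (π.parts.card - 1) : ℂ)) /
                (∏ V ∈ π.parts, (Nat.descFactorial d V.card : ℂ)) := by
  have hd0 : (d : ℂ) ≠ 0 := by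
    have : 0 < d := lt_of_lt_of_le hn1 hnd
    exact_mod_cast this.ne'
  -- notation for the "T" factor
  set T : SetPartition n → ℂ := fun π =>
    ((-1 : ℂ) ^ π.parts.card * (Nat.factorial (π.parts.card - 1) : ℂ)) /
      (∏ V ∈ π.parts, (Nat.descFactorial d V.card : ℂ)) with hT
  -- Step 1: the product of factorials and coefficients is a sum over refinements
  have hF1 : ∀ π : SetPartition n,
      (∏ V ∈ π.parts, (Nat.factorial V.card : ℂ)) * (∏ V ∈ π.parts, coeffA d p V.card)
        = ∑ σ ∈ Finset.univ.filter (fun σ : SetPartition n => σ ≤ π),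
            ∏ V ∈ σ.parts, wgt r V.card := by
    intro π
    rw [partition_sum_le_eq_prod (wgt r) π, ← Finset.prod_mul_distrib]
    refine Finset.prod_congr rfl fun B hB => ?_
    have hBcard : B.card ≤ d := by
      calc B.card ≤ (Finset.univ : Finset (Fin n)).card := Finset.card_le_univ B
        _ = n := by rw [Finset.card_univ, Fintype.card_fin]
        _ ≤ d := hnd
    rw [partition_sum_card r B.card B rfl, coeffA_eq_esymm r hp _ hBcard]
  -- Step 2: the weight of σ equals d^|σ| μ(0,σ) m_σ
  have hF2 : ∀ σ : SetPartition n,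
      ∏ V ∈ σ.parts, wgt r V.card
        = (d : ℂ) ^ σ.parts.card * mu0 n σ * ∏ V ∈ σ.parts, momentOf d r V.card := by
    intro σ
    have hsum : ∑ V ∈ σ.parts, V.card = n := by
      rw [σ.sum_card_parts, Finset.card_univ, Fintype.card_fin]
    have hsub : ∑ V ∈ σ.parts, (V.card - 1) = n - σ.parts.card := by
      have h1 : ∑ V ∈ σ.parts, (V.card - 1) + σ.parts.card = n := by
        rw [Finset.card_eq_sum_ones, ← Finset.sum_add_distrib]
        have hco : ∀ V ∈ σ.parts, V.card - 1 + 1 = V.card := fun V hV => by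
          have : 1 ≤ V.card := Finset.card_pos.mpr (σ.nonempty_of_mem_parts hV)
          omega
        rw [Finset.sum_congr rfl hco]
        exact hsum
      omega
    have hP : ∀ V ∈ σ.parts, Psum r V.card = (d : ℂ) * momentOf d r V.card := by
      intro V hV
      rw [momentOf, Psum, mul_div_cancel₀ _ hd0]
    calc ∏ V ∈ σ.parts, wgt r V.card
        = (∏ V ∈ σ.parts, (-1 : ℂ) ^ (V.card - 1)) *
            (∏ V ∈ σ.parts, ((V.card - 1).factorial : ℂ)) *
            (∏ V ∈ σ.parts, ((d : ℂ) * momentOf d r V.card)) := by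
          rw [← Finset.prod_mul_distrib, ← Finset.prod_mul_distrib]
          exact Finset.prod_congr rfl fun V hV => by rw [wgt, hP V hV]
      _ = ((-1 : ℂ) ^ (n - σ.parts.card)) *
            (∏ V ∈ σ.parts, ((V.card - 1).factorial : ℂ)) *
            ((d : ℂ) ^ σ.parts.card * ∏ V ∈ σ.parts, momentOf d r V.card) := by
          rw [Finset.prod_pow_eq_pow_sum, hsub, Finset.prod_mul_distrib, Finset.prod_const]
      _ = _ := by rw [mu0]; ring
  -- Step 3: rewrite the cumulant and swap the two sums
  rw [finCumulant]
  have hsummand : ∀ π : SetPartition n,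
      ((-1 : ℂ) ^ π.parts.card * (∏ V ∈ π.parts, (Nat.factorial V.card : ℂ)) *
          (∏ V ∈ π.parts, coeffA d p V.card) * (Nat.factorial (π.parts.card - 1) : ℂ)) /
        (∏ V ∈ π.parts, (Nat.descFactorial d V.card : ℂ))
      = (∑ σ ∈ Finset.univ.filter (fun σ : SetPartition n => σ ≤ π),
            ∏ V ∈ σ.parts, wgt r V.card) * T π := by
    intro π
    rw [← hF1 π, hT]
    ring
  rw [Finset.sum_congr rfl fun π _ => hsummand π]
  have hswap : ∑ π : SetPartition n,
      (∑ σ ∈ Finset.univ.filter (fun σ : SetPartition n => σ ≤ π),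
          ∏ V ∈ σ.parts, wgt r V.card) * T π
      = ∑ σ : SetPartition n, (∏ V ∈ σ.parts, wgt r V.card) *
          ∑ π ∈ Finset.univ.filter (fun π : SetPartition n => σ ≤ π), T π := by
    simp_rw [Finset.sum_filter, Finset.sum_mul, Finset.mul_sum]
    rw [Finset.sum_comm]
    refine Finset.sum_congr rfl fun σ _ => Finset.sum_congr rfl fun π _ => ?_
    split_ifs <;> ring
  rw [hswap]
  have hRHS : ∀ σ : SetPartition n,
      (d : ℂ) ^ σ.parts.card * mu0 n σ * (∏ V ∈ σ.parts, momentOf d r V.card) *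
          (∑ π ∈ Finset.univ.filter (fun π : SetPartition n => σ ≤ π), T π)
        = (∏ V ∈ σ.parts, wgt r V.card) *
          ∑ π ∈ Finset.univ.filter (fun π : SetPartition n => σ ≤ π), T π := by
    intro σ
    rw [hF2 σ]
  rw [show (∑ σ : SetPartition n,
      (d : ℂ) ^ σ.parts.card * mu0 n σ * (∏ V ∈ σ.parts, momentOf d r V.card) *
        ∑ π ∈ Finset.univ.filter (fun π : SetPartition n => σ ≤ π), T π)
      = ∑ σ : SetPartition n, (∏ V ∈ σ.parts, wgt r V.card) *
          ∑ π ∈ Finset.univ.filter (fun π : SetPartition n => σ ≤ π), T π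
    from Finset.sum_congr rfl fun σ _ => hRHS σ]
  rw [const_eq hn1 hnd]
end
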